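/- Let p be a prime, q = p^t for t ≥ 0, and n = r·q for a positive integer r. Then for every S ⊆ [n-1], β_n(S) ≡ (-1)^{|S \ (q·[r-1])|} · β_r(S/q) (mod p), where q·[r-1] = {q, 2q, ..., (r-1)q} and S/q = {s/q : s ∈ S, q | s}. -/

import Mathlib

/-!
By Möbius inversion on the subsets of `S`, `β_n` is an alternating sum of the numbers
`α_n(T) = #{π | Des π ⊆ T}`, so it suffices to know `α_n` modulo `p`. Sorting identifies the
permutations with descent set in `T` with the rearrangements of the weakly increasing word
`x ↦ #{t ∈ T | t ≤ x}` (the block of the position `x`). Writing the positions of `[r q]` as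
`Fin r × ZMod q`, the rotation of the second coordinate generates a group of order `q = p^t`
acting on these rearrangements; its fixed points are the words that do not depend on the second
coordinate. Hence `α_{rq}(T) ≡ α_r(T/q) (mod p)` when `q` divides every element of `T`, and
`α_{rq}(T) ≡ 0` otherwise: a fixed word takes every value a multiple of `q` times, while for
`s ∈ T` the first `s` positions form a union of blocks. In the inversion formula only the
`T ⊆ S ∩ qℕ` survive, and they produce `(-1)^{|S \ q·[r-1]|} β_r(S/q)`.
-/

open Finset

/-- The descent set of a permutation of `{1,…,n}` (written as a permutation of `Fin n`),
as a subset of `[n-1] = {1,…,n-1}`: `i` is a descent if `π_i > π_{i+1}` (1-indexed). -/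
def descSet (n : ℕ) (π : Equiv.Perm (Fin n)) : Finset ℕ :=
  (Finset.Icc 1 (n - 1)).filter (fun i =>
    ∃ h : i < n, π ⟨i, h⟩ < π ⟨i - 1, by omega⟩)

/-- `β_n(S)`: the number of permutations of `{1,…,n}` with descent set exactly `S`. -/
def descBeta (n : ℕ) (S : Finset ℕ) : ℕ :=
  (Finset.univ.filter (fun π : Equiv.Perm (Fin n) => descSet n π = S)).card

/-- `α_n(S)`: the number of permutations of `{1,…,n}` with descent set contained in `S`. -/
def descAlpha (n : ℕ) (S : Finset ℕ) : ℕ :=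
  (Finset.univ.filter (fun π : Equiv.Perm (Fin n) => descSet n π ⊆ S)).card

theorem Finset.card_modEq_card_filter_apply_eq {β : Type*} [DecidableEq β] {p t : ℕ}
    [Fact p.Prime] {σ : Equiv.Perm β} (hσ : σ ^ p ^ t = 1) {W : Finset β}
    (hW : ∀ x, σ x ∈ W ↔ x ∈ W) : #W ≡ #{x ∈ W | σ x = x} [MOD p] := by
  have hσW : σ.subtypePerm hW ^ p ^ t = 1 := by
    rw [Equiv.Perm.subtypePerm_pow]
    simp only [hσ]
    rfl
  have := Equiv.Perm.card_compl_support_modEq hσW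
  rw [Fintype.card_coe] at this
  convert this.symm using 1
  rw [← card_map (Function.Embedding.subtype _)]
  congr 1
  ext x
  simp [and_comm]

section Rearrangements

variable {α β κ : Type*} [Fintype α] [DecidableEq α] [DecidableEq κ]

def rearrangements (g : α → κ) : Finset (α → κ) :=
  univ.image fun σ : Equiv.Perm α => g ∘ σ

theorem mem_rearrangements {f g : α → κ} :
    f ∈ rearrangements g ↔ ∃ σ : Equiv.Perm α, g ∘ σ = f := by
  simp [rearrangements]

theorem comp_perm_mem_rearrangements_iff {f g : α → κ} (τ : Equiv.Perm α) :
    f ∘ τ ∈ rearrangements g ↔ f ∈ rearrangements g := by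
  simp only [mem_rearrangements]
  constructor
  · rintro ⟨σ, hσ⟩
    exact ⟨σ * τ⁻¹, by rw [Equiv.Perm.coe_mul, ← Function.comp_assoc, hσ]; ext; simp⟩
  · rintro ⟨σ, rfl⟩
    exact ⟨σ * τ, rfl⟩

theorem mem_rearrangements_iff_map_univ {f g : α → κ} :
    f ∈ rearrangements g ↔ univ.val.map f = univ.val.map g := by
  rw [mem_rearrangements]
  constructor
  · rintro ⟨σ, rfl⟩
    rw [← Multiset.map_map, Multiset.map_univ_val_equiv]
  · intro h
    have hfib : ∀ c, Fintype.card {a // f a = c} = Fintype.card {a // g a = c} := by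
      intro c
      simpa [Fintype.card_subtype, Multiset.count_map, card_def, filter_val, eq_comm] using
        congrArg (Multiset.count c) h
    refine ⟨Equiv.ofFiberEquiv fun c => Fintype.equivOfCardEq (hfib c), ?_⟩
    ext a
    exact Equiv.ofFiberEquiv_map _ a

theorem card_rearrangements_comp_equiv [Fintype β] [DecidableEq β] (e : α ≃ β) (g : β → κ) :
    #(rearrangements (g ∘ e)) = #(rearrangements g) := by
  have hmem : ∀ f : β → κ, f ∘ e ∈ rearrangements (g ∘ e) ↔ f ∈ rearrangements g := by
    intro f
    simp only [mem_rearrangements_iff_map_univ, ← Multiset.map_map, Multiset.map_univ_val_equiv]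
  refine card_nbij' (· ∘ e.symm) (· ∘ e) (fun f hf => ?_) (fun f hf => (hmem f).2 hf)
    (fun f _ => ?_) (fun f _ => ?_)
  · rw [mem_coe, ← hmem]
    simpa [Function.comp_assoc] using hf
  · ext; simp
  · ext; simp

theorem card_rearrangements_modEq {p t : ℕ} [Fact p.Prime] {τ : Equiv.Perm α}
    (hτ : τ ^ p ^ t = 1) (g : α → κ) :
    #(rearrangements g) ≡ #{f ∈ rearrangements g | f ∘ τ = f} [MOD p] := by
  set σ : Equiv.Perm (α → κ) := τ.symm.arrowCongr (Equiv.refl κ)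
  have hσ : ∀ k : ℕ, ∀ f, (σ ^ k) f = f ∘ ⇑(τ ^ k) := by
    intro k
    induction k with
    | zero => intro f; rfl
    | succ k ih => intro f; rw [pow_succ, Equiv.Perm.mul_apply, ih, pow_succ']; rfl
  have hσ' : σ ^ p ^ t = 1 := by
    ext f : 1
    rw [hσ, hτ]
    rfl
  exact card_modEq_card_filter_apply_eq hσ' fun f => comp_perm_mem_rearrangements_iff τ

theorem comp_sort_eq_of_mem_rearrangements {n : ℕ} [LinearOrder β] {g w : Fin n → β}
    (hg : Monotone g) (hw : w ∈ rearrangements g) : w ∘ Tuple.sort w = g := by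
  obtain ⟨σ, rfl⟩ := mem_rearrangements.1 hw
  rw [Tuple.comp_perm_comp_sort_eq_comp_sort, Tuple.sort_eq_refl_iff_monotone.2 hg]
  rfl

end Rearrangements

section Rotation

variable {ι κ : Type*} {q : ℕ}

variable (ι q) in
def rotateSnd : Equiv.Perm (ι × ZMod q) :=
  (Equiv.refl ι).prodCongr (Equiv.addRight 1)

theorem rotateSnd_pow_apply (k : ℕ) (x : ι × ZMod q) :
    (rotateSnd ι q ^ k) x = (x.1, x.2 + k) := by
  induction k with
  | zero => simp
  | succ k ih =>
    rw [pow_succ', Equiv.Perm.mul_apply, ih]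
    simp [rotateSnd, add_assoc]

theorem rotateSnd_pow_self : rotateSnd ι q ^ q = 1 := by
  ext x <;> simp [rotateSnd_pow_apply]

theorem comp_rotateSnd_eq_self_iff [NeZero q] {f : ι × ZMod q → κ} :
    f ∘ rotateSnd ι q = f ↔ ∃ h : ι → κ, h ∘ Prod.fst = f := by
  constructor
  · intro hf
    have hpow : ∀ k : ℕ, f ∘ ⇑(rotateSnd ι q ^ k) = f := by
      intro k
      induction k with
      | zero => rfl
      | succ k ih => rw [pow_succ, Equiv.Perm.coe_mul, ← Function.comp_assoc, ih, hf]
    refine ⟨fun a => f (a, 0), funext fun x => ?_⟩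
    simpa [rotateSnd_pow_apply] using (congrFun (hpow x.2.val) (x.1, 0)).symm
  · rintro ⟨h, rfl⟩
    rfl

variable [Fintype ι] [DecidableEq κ]

theorem map_univ_comp_fst [NeZero q] (h : ι → κ) :
    (univ : Finset (ι × ZMod q)).val.map (h ∘ Prod.fst) = q • univ.val.map h := by
  ext c
  simp only [Multiset.count_nsmul, Multiset.count_map, ← filter_val, ← card_def,
    ← univ_product_univ, Function.comp_apply, filter_product_left (fun a => c = h a),
    card_product, card_univ, ZMod.card, mul_comm]

variable [DecidableEq ι]

theorem comp_fst_mem_rearrangements_iff [NeZero q] {h h₀ : ι → κ} :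
    h ∘ Prod.fst ∈ rearrangements (h₀ ∘ Prod.fst : ι × ZMod q → κ) ↔ h ∈ rearrangements h₀ := by
  simp only [mem_rearrangements_iff_map_univ, map_univ_comp_fst]
  refine ⟨fun heq => Multiset.ext.2 fun c => ?_, fun heq => by rw [heq]⟩
  have := congrArg (Multiset.count c) heq
  simp only [Multiset.count_nsmul] at this
  exact Nat.eq_of_mul_eq_mul_left (Nat.pos_of_neZero q) this

theorem card_rearrangements_comp_fst_modEq {p t : ℕ} [Fact p.Prime] (h₀ : ι → κ) :
    #(rearrangements (h₀ ∘ Prod.fst : ι × ZMod (p ^ t) → κ)) ≡ #(rearrangements h₀) [MOD p] := by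
  suffices hfix : #{f ∈ rearrangements (h₀ ∘ Prod.fst) | f ∘ rotateSnd ι (p ^ t) = f} =
      #(rearrangements h₀) from hfix ▸ card_rearrangements_modEq rotateSnd_pow_self _
  have hinj : Function.Injective fun h : ι → κ => (h ∘ Prod.fst : ι × ZMod (p ^ t) → κ) :=
    fun h h' he => funext fun a => congrFun he (a, 0)
  rw [← card_image_of_injective _ hinj]
  congr 1
  ext f
  simp only [mem_filter, mem_image, comp_rotateSnd_eq_self_iff]
  constructor
  · rintro ⟨hf, h, rfl⟩
    exact ⟨h, comp_fst_mem_rearrangements_iff.1 hf, rfl⟩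
  · rintro ⟨h, hh, rfl⟩
    exact ⟨comp_fst_mem_rearrangements_iff.2 hh, h, rfl⟩

theorem card_rearrangements_modEq_zero {p t : ℕ} [Fact p.Prime] (g : ι × ZMod (p ^ t) → κ)
    (P : κ → Prop) [DecidablePred P] (hP : ¬ p ^ t ∣ #{x | P (g x)}) :
    #(rearrangements g) ≡ 0 [MOD p] := by
  suffices hfix : #{f ∈ rearrangements g | f ∘ rotateSnd ι (p ^ t) = f} = 0 from
    hfix ▸ card_rearrangements_modEq rotateSnd_pow_self _
  rw [card_eq_zero, filter_eq_empty_iff]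
  rintro f hf hfix
  obtain ⟨h, rfl⟩ := comp_rotateSnd_eq_self_iff.1 hfix
  have hcard : ∀ f : ι × ZMod (p ^ t) → κ,
      #{x | P (f x)} = Multiset.card ((univ.val.map f).filter P) := by
    intro f
    rw [Multiset.filter_map, Multiset.card_map]
    rfl
  apply hP
  rw [hcard, ← mem_rearrangements_iff_map_univ.1 hf, map_univ_comp_fst, Multiset.filter_nsmul,
    Multiset.card_nsmul]
  exact dvd_mul_right _ _

end Rotation

def blockIndex (S : Finset ℕ) (x : ℕ) : ℕ := #{s ∈ S | s ≤ x}

theorem blockIndex_mono (S : Finset ℕ) : Monotone (blockIndex S) :=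
  fun _ _ hxy => card_le_card (monotone_filter_right S fun _ _ hs => hs.trans hxy)

theorem blockIndex_lt_blockIndex_iff {S : Finset ℕ} {s x : ℕ} (hs : s ∈ S) :
    blockIndex S x < blockIndex S s ↔ x < s := by
  refine ⟨fun h => not_le.1 fun hsx => h.not_ge (blockIndex_mono S hsx), fun hxs => ?_⟩
  refine card_lt_card ((ssubset_iff_of_subset ?_).2 ⟨s, by simp [hs], by simp [hxs]⟩)
  exact monotone_filter_right S fun _ _ h => h.trans hxs.le

theorem blockIndex_succ_eq_iff {S : Finset ℕ} {i : ℕ} :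
    blockIndex S (i + 1) = blockIndex S i ↔ i + 1 ∉ S := by
  refine ⟨fun h hi => ((blockIndex_lt_blockIndex_iff hi).2 (lt_add_one i)).ne h.symm,
    fun hi => congrArg card (filter_congr fun s hs => ?_)⟩
  have : s ≠ i + 1 := fun h => hi (h ▸ hs)
  omega

theorem blockIndex_eq_blockIndex_div {S : Finset ℕ} {q : ℕ} (hq : 0 < q) (hS : ∀ s ∈ S, q ∣ s)
    (x : ℕ) : blockIndex S x = blockIndex (S.image (· / q)) (x / q) := by
  have hinj : Set.InjOn (· / q) S := fun a ha b hb h => by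
    rw [← Nat.div_mul_cancel (hS a ha), ← Nat.div_mul_cancel (hS b hb)]
    exact congrArg (· * q) h
  rw [blockIndex, blockIndex, filter_image,
    card_image_of_injOn (hinj.mono (coe_subset.2 (filter_subset _ _)))]
  refine congrArg card (filter_congr fun s hs => ?_)
  rw [Nat.le_div_iff_mul_le hq, Nat.div_mul_cancel (hS s hs)]

theorem lt_succ_of_succ_notMem_descSet {n : ℕ} {π : Equiv.Perm (Fin n)} {k : ℕ} (hk : k + 1 < n)
    (h : k + 1 ∉ descSet n π) : π ⟨k, by omega⟩ < π ⟨k + 1, hk⟩ := by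
  simp only [descSet, mem_filter, mem_Icc, not_and, not_exists, not_lt] at h
  refine lt_of_le_of_ne (h ⟨by omega, by omega⟩ hk) fun he => ?_
  simpa using π.injective he

theorem descSet_subset_iff {n : ℕ} {S : Finset ℕ} {π : Equiv.Perm (Fin n)} :
    descSet n π ⊆ S ↔
      ∀ i j : Fin n, i < j → blockIndex S i = blockIndex S j → π i < π j := by
  constructor
  · intro hS i j hij hblock
    let f : ℕ → ℕ := fun k => if h : k < n then π ⟨k, h⟩ else 0
    have hmono : StrictMonoOn f (Set.Icc i.val j.val) := by
      refine strictMonoOn_of_lt_add_one Set.ordConnected_Icc ?_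
      rintro a - ⟨hia, -⟩ ⟨-, haj⟩
      have hsucc : blockIndex S (a + 1) = blockIndex S a := by
        have h₁ := blockIndex_mono S hia
        have h₂ := blockIndex_mono S haj
        have h₃ := blockIndex_mono S (Nat.le_add_right a 1)
        omega
      have := j.isLt
      have := lt_succ_of_succ_notMem_descSet (π := π) (by omega)
        fun hd => blockIndex_succ_eq_iff.1 hsucc (hS hd)
      simpa [f, show a < n by omega, show a + 1 < n by omega] using this
    have := hmono ⟨le_rfl, hij.le⟩ ⟨hij.le, le_rfl⟩ hij
    simp only [f, dif_pos i.isLt, dif_pos j.isLt, Fin.eta] at this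
    exact this
  · intro h i hi
    by_contra hiS
    simp only [descSet, mem_filter, mem_Icc] at hi
    obtain ⟨⟨hi1, -⟩, hin, hdesc⟩ := hi
    obtain ⟨k, rfl⟩ : ∃ k, i = k + 1 := ⟨i - 1, by omega⟩
    have := h ⟨k, by omega⟩ ⟨k + 1, hin⟩ (Fin.mk_lt_mk.2 (lt_add_one k))
      (blockIndex_succ_eq_iff.2 hiS).symm
    exact absurd hdesc (by simpa using this.le)

def blockMap (n : ℕ) (S : Finset ℕ) : Fin n → ℕ := fun x => blockIndex S x

theorem monotone_blockMap (n : ℕ) (S : Finset ℕ) : Monotone (blockMap n S) :=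
  (blockIndex_mono S).comp Fin.val_strictMono.monotone

theorem descSet_subset_iff_eq_sort {n : ℕ} {S : Finset ℕ} {π : Equiv.Perm (Fin n)} :
    descSet n π ⊆ S ↔ π = Tuple.sort (blockMap n S ∘ π.symm) := by
  rw [descSet_subset_iff, Tuple.eq_sort_iff]
  simp only [Function.comp_def, Equiv.symm_apply_apply]
  exact ⟨fun h => ⟨monotone_blockMap n S, h⟩, And.right⟩

theorem descAlpha_eq_card_rearrangements (n : ℕ) (S : Finset ℕ) :
    descAlpha n S = #(rearrangements (blockMap n S)) := by
  have hsort : ∀ w ∈ rearrangements (blockMap n S), blockMap n S ∘ (Tuple.sort w).symm = w := by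
    intro w hw
    rw [← comp_sort_eq_of_mem_rearrangements (monotone_blockMap n S) hw]
    ext; simp
  refine card_bij' (fun π _ => blockMap n S ∘ π.symm) (fun w _ => Tuple.sort w)
    (fun π _ => mem_rearrangements.2 ⟨π.symm, rfl⟩) (fun w hw => ?_) (fun π hπ => ?_) hsort
  · simp only [mem_filter, mem_univ, true_and, descSet_subset_iff_eq_sort, hsort w hw]
  · simp only [mem_filter, mem_univ, true_and, descSet_subset_iff_eq_sort] at hπ
    exact hπ.symm

theorem descAlpha_modEq {p t r : ℕ} [Fact p.Prime] {S : Finset ℕ} (hS : ∀ s ∈ S, s ≤ r * p ^ t) :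
    descAlpha (r * p ^ t) S ≡
      if ∀ s ∈ S, p ^ t ∣ s then descAlpha r (S.image (· / p ^ t)) else 0 [MOD p] := by
  set q := p ^ t
  have hq : 0 < q := Nat.pos_of_neZero q
  -- The position `b + q * a` lies in the block `a` of `S / q`.
  let e : Fin r × ZMod q ≃ Fin (r * q) :=
    ((Equiv.refl _).prodCongr (ZMod.finEquiv q).toEquiv).symm.trans finProdFinEquiv
  have he : ∀ x, (e x : ℕ) = ((ZMod.finEquiv q).symm x.2 : ℕ) + q * x.1 := fun x =>
    finProdFinEquiv_apply_val _
  rw [descAlpha_eq_card_rearrangements, ← card_rearrangements_comp_equiv e]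
  split_ifs with hdiv
  · have hcomp : blockMap (r * q) S ∘ e = blockMap r (S.image (· / q)) ∘ Prod.fst := by
      ext x
      simp only [Function.comp_apply, blockMap, he, blockIndex_eq_blockIndex_div hq hdiv,
        Nat.add_mul_div_left _ _ hq, Nat.div_eq_of_lt (Fin.isLt _), zero_add]
    rw [hcomp, descAlpha_eq_card_rearrangements]
    exact card_rearrangements_comp_fst_modEq _
  · obtain ⟨s, hs, hqs⟩ := not_forall₂.1 hdiv
    refine card_rearrangements_modEq_zero _ (· < blockIndex S s) ?_
    have hcard : #{x | (blockMap (r * q) S ∘ e) x < blockIndex S s} = s := by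
      rw [card_equiv e (t := {y | y.val < s}) fun x => by
        simp [blockMap, blockIndex_lt_blockIndex_iff hs], Fin.card_filter_val_lt]
      exact min_eq_right (hS s hs)
    rwa [hcard]

theorem Finset.sum_Icc_neg_one_pow_card_sdiff {α R : Type*} [DecidableEq α] [CommRing R]
    {U S : Finset α} (hUS : U ⊆ S) :
    ∑ T ∈ Icc U S, (-1 : R) ^ #(S \ T) = if U = S then 1 else 0 := by
  have hsum : ∑ T ∈ Icc U S, (-1 : R) ^ #(S \ T) = ∑ W ∈ (S \ U).powerset, (-1 : R) ^ #W := by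
    refine sum_nbij' (S \ ·) (S \ ·) (fun T hT => ?_) (fun W hW => ?_) (fun T hT => ?_)
      (fun W hW => ?_) fun _ _ => rfl
    · rw [mem_Icc] at hT
      exact mem_powerset.2 (sdiff_subset_sdiff le_rfl hT.1)
    · rw [mem_powerset] at hW
      exact mem_Icc.2 ⟨subset_sdiff.2 ⟨hUS, disjoint_of_subset_right hW disjoint_sdiff⟩,
        sdiff_subset⟩
    · exact sdiff_sdiff_eq_self (mem_Icc.1 hT).2
    · exact sdiff_sdiff_eq_self ((mem_powerset.1 hW).trans sdiff_subset)
  have hint := congrArg (Int.cast : ℤ → R) (sum_powerset_neg_one_pow_card (x := S \ U))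
  push_cast at hint
  rw [hsum, hint]
  simp only [sdiff_eq_empty_iff_subset]
  exact if_congr ⟨fun h => hUS.antisymm h, fun h => h ▸ le_rfl⟩ rfl rfl

theorem Finset.sum_powerset_neg_one_pow_card_sdiff_mul_sum_powerset {α R : Type*}
    [DecidableEq α] [CommRing R] (f : Finset α → R) (S : Finset α) :
    ∑ T ∈ S.powerset, (-1 : R) ^ #(S \ T) * ∑ U ∈ T.powerset, f U = f S := by
  simp_rw [mul_sum]
  rw [sum_comm' (t' := S.powerset) (s' := fun U => Icc U S) fun T U => by
    simp only [mem_powerset, mem_Icc]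
    exact ⟨fun h => ⟨⟨h.2, h.1⟩, h.2.trans h.1⟩, fun h => ⟨h.1.2, h.1.1⟩⟩]
  simp_rw [← sum_mul]
  rw [sum_congr rfl fun U hU => by rw [sum_Icc_neg_one_pow_card_sdiff (mem_powerset.1 hU)]]
  simp only [ite_mul, one_mul, zero_mul, sum_ite_eq', mem_powerset_self, if_true]

theorem descAlpha_eq_sum_descBeta (n : ℕ) (S : Finset ℕ) :
    descAlpha n S = ∑ T ∈ S.powerset, descBeta n T := by
  rw [descAlpha, card_eq_sum_card_fiberwise (f := descSet n) (t := S.powerset)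
    fun π hπ => mem_powerset.2 (mem_filter.1 hπ).2]
  refine sum_congr rfl fun T hT => ?_
  rw [filter_filter, descBeta]
  exact congrArg card (filter_congr fun π _ => ⟨And.right, fun h => ⟨h ▸ mem_powerset.1 hT, h⟩⟩)

theorem descBeta_eq_sum_descAlpha {R : Type*} [CommRing R] (n : ℕ) (S : Finset ℕ) :
    (descBeta n S : R) = ∑ T ∈ S.powerset, (-1) ^ #(S \ T) * (descAlpha n T : R) := by
  simp only [descAlpha_eq_sum_descBeta, Nat.cast_sum]
  exact (sum_powerset_neg_one_pow_card_sdiff_mul_sum_powerset (fun T => (descBeta n T : R)) S).symm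

theorem sdiff_image_mul_Icc {q r : ℕ} {S : Finset ℕ} (hS : S ⊆ Icc 1 (r * q - 1)) :
    S \ (Icc 1 (r - 1)).image (q * ·) = S \ S.filter (q ∣ ·) := by
  ext s
  simp only [mem_sdiff, mem_filter, mem_image, mem_Icc, and_congr_right_iff]
  intro hs
  have hs' := mem_Icc.1 (hS hs)
  refine not_congr ⟨fun ⟨i, _, hi⟩ => ⟨hs, hi ▸ dvd_mul_right q i⟩,
    fun ⟨_, i, hi⟩ => ⟨i, ?_, hi.symm⟩⟩
  subst hi
  have : i < r := Nat.lt_of_mul_lt_mul_left (by rw [mul_comm q r]; omega : q * i < q * r)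
  have : 0 < i := Nat.pos_of_ne_zero (by rintro rfl; omega)
  omega

theorem image_mul_image_div {q : ℕ} {S : Finset ℕ} (hS : ∀ s ∈ S, q ∣ s) :
    (S.image (· / q)).image (q * ·) = S := by
  rw [image_image]
  exact (image_congr fun s hs => Nat.mul_div_cancel' (hS s hs)).trans image_id

theorem image_div_image_mul {q : ℕ} (hq : 0 < q) (T : Finset ℕ) :
    (T.image (q * ·)).image (· / q) = T := by
  rw [image_image]
  exact (image_congr fun i _ => Nat.mul_div_cancel_left i hq).trans image_id

theorem card_sdiff_image_mul {q : ℕ} (hq : 0 < q) {S T : Finset ℕ}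
    (hT : T ⊆ (S.filter (q ∣ ·)).image (· / q)) :
    #(S \ T.image (q * ·)) =
      #(S \ S.filter (q ∣ ·)) + #((S.filter (q ∣ ·)).image (· / q) \ T) := by
  have hinj := mul_right_injective₀ hq.ne'
  have hS₀ : ((S.filter (q ∣ ·)).image (· / q)).image (q * ·) = S.filter (q ∣ ·) :=
    image_mul_image_div fun s hs => (mem_filter.1 hs).2
  have hT₀ : T.image (q * ·) ⊆ S.filter (q ∣ ·) := hS₀ ▸ image_subset_image hT
  have h₁ := card_le_card hT₀
  have h₂ := card_le_card (filter_subset (q ∣ ·) S)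
  have h₃ := congrArg card hS₀
  rw [card_image_of_injective _ hinj] at h₁ h₃
  rw [card_sdiff_of_subset (hT₀.trans (filter_subset _ _)),
    card_sdiff_of_subset (filter_subset _ _), card_sdiff_of_subset hT,
    card_image_of_injective _ hinj]
  omega

theorem sum_powerset_filter_dvd {M : Type*} [AddCommMonoid M] {q : ℕ} (hq : 0 < q)
    (S : Finset ℕ) (F : Finset ℕ → M) :
    ∑ T ∈ (S.filter (q ∣ ·)).powerset, F T =
      ∑ T ∈ ((S.filter (q ∣ ·)).image (· / q)).powerset, F (T.image (q * ·)) := by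
  conv_lhs => rw [← image_mul_image_div fun s hs => (mem_filter.1 hs).2]
  rw [powerset_image,
    sum_image fun T _ T' _ h => image_injective (β := ℕ) (mul_right_injective₀ hq.ne') h]

theorem descBeta_cast_eq_sum_powerset_filter_dvd {p t r : ℕ} [Fact p.Prime] {S : Finset ℕ}
    (hS : ∀ s ∈ S, s ≤ r * p ^ t) :
    (descBeta (r * p ^ t) S : ZMod p) = ∑ T ∈ (S.filter (p ^ t ∣ ·)).powerset,
      (-1) ^ #(S \ T) * (descAlpha r (T.image (· / p ^ t)) : ZMod p) := by
  have hpowerset : (S.filter (p ^ t ∣ ·)).powerset =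
      S.powerset.filter fun T => ∀ s ∈ T, p ^ t ∣ s := by
    ext T
    simp only [mem_powerset, mem_filter, subset_iff]
    exact ⟨fun h => ⟨fun s hs => (h hs).1, fun s hs => (h hs).2⟩, fun h s hs => ⟨h.1 hs, h.2 s hs⟩⟩
  rw [descBeta_eq_sum_descAlpha, hpowerset, sum_filter]
  refine sum_congr rfl fun T hT => ?_
  rw [(ZMod.natCast_eq_natCast_iff _ _ p).2
    (descAlpha_modEq fun s hs => hS s (mem_powerset.1 hT hs))]
  split_ifs <;> simp

theorem stmt_11_general (p t r n : ℕ) (hp : p.Prime) (hn : n = r * p ^ t)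
    (S : Finset ℕ) (hS : S ⊆ Finset.Icc 1 (n - 1)) :
    (descBeta n S : ℤ) ≡
      (-1) ^ ((S \ (Finset.Icc 1 (r - 1)).image (fun i => p ^ t * i)).card) *
        descBeta r ((S.filter (fun s => p ^ t ∣ s)).image (fun s => s / p ^ t))
      [ZMOD p] := by
  subst hn
  have := Fact.mk hp
  have hq : 0 < p ^ t := Nat.pos_of_neZero _
  rw [sdiff_image_mul_Icc hS, ← ZMod.intCast_eq_intCast_iff]
  push_cast
  have hS' : ∀ s ∈ S, s ≤ r * p ^ t := fun s hs => (mem_Icc.1 (hS hs)).2.trans (Nat.sub_le _ _)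
  rw [descBeta_cast_eq_sum_powerset_filter_dvd hS', sum_powerset_filter_dvd hq,
    descBeta_eq_sum_descAlpha, mul_sum]
  refine sum_congr rfl fun T hT => ?_
  rw [card_sdiff_image_mul hq (mem_powerset.1 hT), image_div_image_mul hq, pow_add, mul_assoc]

/-- For `q = p^t` and `n = r·q`:
`β_n(S) ≡ (-1)^{|S \ q·[r-1]|} · β_r(S/q) (mod p)`. -/
theorem stmt_11 (p t r n : ℕ) (hp : p.Prime) (hr : 0 < r) (hn : n = r * p ^ t)
    (S : Finset ℕ) (hS : S ⊆ Finset.Icc 1 (n - 1)) :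
    (descBeta n S : ℤ) ≡
      (-1) ^ ((S \ (Finset.Icc 1 (r - 1)).image (fun i => p ^ t * i)).card) *
        descBeta r ((S.filter (fun s => p ^ t ∣ s)).image (fun s => s / p ^ t))
      [ZMOD p] :=
  stmt_11_general p t r n hp hn S hS
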